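/- Let Y, Z be finite simple graphs, y_1, y_2 vertices of Y and z a vertex of Z. If (y_1, z) and (y_2, z) are strongly cospectral in Y □ Z, then y_1 and y_2 are strongly cospectral in Y. -/

import Mathlib

open Matrix

/-- `W` is the (orthogonal) spectral projector of the symmetric matrix `A`
onto the eigenspace of the eigenvalue `θ`. -/
def IsSpectralProjector {V : Type*} [Fintype V] [DecidableEq V]
    (A W : Matrix V V ℝ) (θ : ℝ) : Prop :=
  W * W = W ∧ W.IsSymm ∧ A * W = θ • W ∧
    ∀ v : V → ℝ, A.mulVec v = θ • v → W.mulVec v = v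

/-- Two vertices are strongly cospectral with respect to the matrix `A` if every
spectral projector sends their characteristic vectors to equal or opposite vectors. -/
def StronglyCospectral {V : Type*} [Fintype V] [DecidableEq V]
    (A : Matrix V V ℝ) (u v : V) : Prop :=
  ∀ (θ : ℝ) (W : Matrix V V ℝ), IsSpectralProjector A W θ →
    W.mulVec (Pi.single u 1) = W.mulVec (Pi.single v 1) ∨
    W.mulVec (Pi.single u 1) = -W.mulVec (Pi.single v 1)

/-! Let `B`, `C` be the adjacency matrices of `Y`, `Z`. If `W` is the `θ`-projector of `B` and
`F` a `μ`-projector of `C` with `F e_z ≠ 0` (one exists by the spectral theorem for `C`), the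
columns of `W ⊗ F` are `(θ + μ)`-eigenvectors of `B ⊗ 1 + 1 ⊗ C`, so the corresponding projector
`U` satisfies `(W ⊗ F) U = W ⊗ F`. Applying this to `U e_(y, z)` gives `W e_y ⊗ F e_z`, so
`U e_(y₁, z) = ± U e_(y₂, z)` yields `W e_y₁ ⊗ F e_z = ± W e_y₂ ⊗ F e_z`, and cancelling a
nonzero entry of `F e_z` leaves `W e_y₁ = ± W e_y₂`. -/

section Eigenprojection

open Module.End WithLp

variable {V : Type*} [Fintype V] [DecidableEq V]

noncomputable def eigenprojection (A : Matrix V V ℝ) (θ : ℝ) : Matrix V V ℝ :=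
  toEuclideanLin.symm (eigenspace (toEuclideanLin A) θ).starProjection.toLinearMap

lemma toEuclideanLin_eigenprojection (A : Matrix V V ℝ) (θ : ℝ) :
    toEuclideanLin (eigenprojection A θ) =
      (eigenspace (toEuclideanLin A) θ).starProjection.toLinearMap :=
  LinearEquiv.apply_symm_apply _ _

lemma eigenprojection_mulVec (A : Matrix V V ℝ) (θ : ℝ) (v : V → ℝ) :
    eigenprojection A θ *ᵥ v =
      ofLp ((eigenspace (toEuclideanLin A) θ).starProjection (toLp 2 v)) := by
  rw [← ContinuousLinearMap.coe_coe, ← toEuclideanLin_eigenprojection, toLpLin_apply]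

lemma toLp_mem_eigenspace_iff (A : Matrix V V ℝ) (θ : ℝ) (v : V → ℝ) :
    toLp 2 v ∈ eigenspace (toEuclideanLin A) θ ↔ A *ᵥ v = θ • v := by
  rw [mem_eigenspace_iff, toLpLin_apply]
  exact ⟨fun h => by simpa using congrArg ofLp h, fun h => by rw [h]; rfl⟩

lemma isSpectralProjector_eigenprojection (A : Matrix V V ℝ) (θ : ℝ) :
    IsSpectralProjector A (eigenprojection A θ) θ := by
  set K := eigenspace (toEuclideanLin A) θ
  refine ⟨?_, ?_, ?_, fun v hv => ?_⟩
  · apply toEuclideanLin.injective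
    rw [toLpLin_mul_same, toEuclideanLin_eigenprojection]
    exact ContinuousLinearMap.IsIdempotentElem.toLinearMap K.isIdempotentElem_starProjection
  · rw [← isHermitian_iff_isSymm, ← isSymmetric_toEuclideanLin_iff,
      toEuclideanLin_eigenprojection]
    exact K.starProjection_isSymmetric
  · apply toEuclideanLin.injective
    ext1 x
    rw [toLpLin_mul_same, map_smul, toEuclideanLin_eigenprojection]
    exact mem_eigenspace_iff.mp (K.starProjection_apply_mem x)
  · rw [eigenprojection_mulVec,
      K.starProjection_eq_self_iff.mpr ((toLp_mem_eigenspace_iff A θ v).mpr hv)]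

lemma exists_eigenprojection_mulVec_single_ne_zero {A : Matrix V V ℝ} (hA : A.IsSymm) (v : V) :
    ∃ μ, eigenprojection A μ *ᵥ Pi.single v 1 ≠ 0 := by
  by_contra! h
  have hT : (toEuclideanLin A).IsSymmetric :=
    isSymmetric_toEuclideanLin_iff.mpr (isHermitian_iff_isSymm.mpr hA)
  have hmem : toLp 2 (Pi.single v (1 : ℝ)) ∈ (⨆ μ, eigenspace (toEuclideanLin A) μ)ᗮ := by
    rw [← Submodule.iInf_orthogonal, Submodule.mem_iInf]
    intro μ
    rw [← Submodule.starProjection_apply_eq_zero_iff, ← ofLp_eq_zero, ← eigenprojection_mulVec,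
      h μ]
  rw [hT.orthogonalComplement_iSup_eigenspaces_eq_bot, Submodule.mem_bot] at hmem
  simpa using congrArg (fun x : EuclideanSpace ℝ V => x v) hmem

end Eigenprojection

namespace IsSpectralProjector

variable {V ι : Type*} [Fintype V] [DecidableEq V] {A U : Matrix V V ℝ} {θ : ℝ}
  {M : Matrix V ι ℝ}

lemma mul_eq_self (hU : IsSpectralProjector A U θ) (hM : A * M = θ • M) : U * M = M := by
  ext i j
  have hcol : A *ᵥ Mᵀ j = θ • Mᵀ j := funext fun k => by
    simpa [Matrix.mul_apply, mulVec, dotProduct] using congrFun (congrFun hM k) j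
  simpa [Matrix.mul_apply, mulVec, dotProduct] using congrFun (hU.2.2.2 _ hcol) i

lemma transpose_mul_eq_self (hU : IsSpectralProjector A U θ) (hM : A * M = θ • M) :
    Mᵀ * U = Mᵀ := by
  rw [← hU.2.1, ← transpose_mul, hU.mul_eq_self hM]

end IsSpectralProjector

section KroneckerSum

open scoped Kronecker

variable {m n : Type*} [Fintype m] [DecidableEq m] [Fintype n] [DecidableEq n]

lemma kroneckerSum_mul_kronecker {R : Type*} [CommRing R] {B W : Matrix m m R}
    {C F : Matrix n n R} {θ μ : R} (hW : B * W = θ • W) (hF : C * F = μ • F) :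
    (B ⊗ₖ 1 + 1 ⊗ₖ C) * (W ⊗ₖ F) = (θ + μ) • (W ⊗ₖ F) := by
  rw [add_mul, ← mul_kronecker_mul, ← mul_kronecker_mul, hW, hF, one_mul, one_mul,
    smul_kronecker, kronecker_smul, add_smul]

lemma kronecker_mulVec_mulVec_single {B W : Matrix m m ℝ} {C F : Matrix n n ℝ}
    {U : Matrix (m × n) (m × n) ℝ} {θ μ : ℝ} (hW : IsSpectralProjector B W θ)
    (hF : IsSpectralProjector C F μ) (hU : IsSpectralProjector (B ⊗ₖ 1 + 1 ⊗ₖ C) U (θ + μ))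
    (y : m) (z : n) :
    (W ⊗ₖ F) *ᵥ (U *ᵥ Pi.single (y, z) 1) = fun p => W p.1 y * F p.2 z := by
  obtain ⟨-, hW_symm, hW_eig, -⟩ := hW
  obtain ⟨-, hF_symm, hF_eig, -⟩ := hF
  have hsymm : (W ⊗ₖ F)ᵀ = W ⊗ₖ F := by rw [← kroneckerMap_transpose, hW_symm, hF_symm]
  rw [mulVec_mulVec, ← hsymm,
    hU.transpose_mul_eq_self (kroneckerSum_mul_kronecker hW_eig hF_eig), hsymm]
  ext p
  simp

theorem StronglyCospectral.of_kroneckerSum {B : Matrix m m ℝ} {C : Matrix n n ℝ}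
    (hC : C.IsSymm) {y₁ y₂ : m} {z : n}
    (h : StronglyCospectral (B ⊗ₖ 1 + 1 ⊗ₖ C) (y₁, z) (y₂, z)) :
    StronglyCospectral B y₁ y₂ := by
  intro θ W hW
  obtain ⟨μ, hμ⟩ := exists_eigenprojection_mulVec_single_ne_zero hC z
  set F := eigenprojection C μ
  set U := eigenprojection (B ⊗ₖ 1 + 1 ⊗ₖ C) (θ + μ)
  have hU : IsSpectralProjector (B ⊗ₖ 1 + 1 ⊗ₖ C) U (θ + μ) :=
    isSpectralProjector_eigenprojection _ _
  obtain ⟨c, hc⟩ : ∃ c, F c z ≠ 0 := by simpa [funext_iff, mulVec_single_one] using hμ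
  have hcol (y : m) :
      W *ᵥ Pi.single y 1 = fun a => ((W ⊗ₖ F) *ᵥ (U *ᵥ Pi.single (y, z) 1)) (a, c) / F c z := by
    rw [kronecker_mulVec_mulVec_single hW (isSpectralProjector_eigenprojection C μ) hU]
    ext a
    simpa using (mul_div_cancel_right₀ (W a y) hc).symm
  rcases h _ _ hU with h' | h'
  · exact Or.inl (by rw [hcol, hcol, h'])
  · refine Or.inr ?_
    rw [hcol, hcol, h', mulVec_neg]
    ext a
    exact neg_div _ _

end KroneckerSum

theorem stmt16 {VY VZ : Type*} [Fintype VY] [DecidableEq VY]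
    [Fintype VZ] [DecidableEq VZ]
    (Y : SimpleGraph VY) (Z : SimpleGraph VZ)
    [DecidableRel Y.Adj] [DecidableRel Z.Adj]
    (y₁ y₂ : VY) (z : VZ)
    (h : StronglyCospectral
      (Matrix.kroneckerMap (· * ·) (Y.adjMatrix ℝ) (1 : Matrix VZ VZ ℝ) +
        Matrix.kroneckerMap (· * ·) (1 : Matrix VY VY ℝ) (Z.adjMatrix ℝ))
      (y₁, z) (y₂, z)) :
    StronglyCospectral (Y.adjMatrix ℝ) y₁ y₂ :=
  h.of_kroneckerSum Z.isSymm_adjMatrix
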